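/- arXiv:1611.01502 — 2 statements merged into one kernel-verified Lean document; each statement's English description precedes it below -/
import Mathlib

section
/- Let ψ : Q → R be a nonzero homomorphism of spaces of quantities with Q free of zero divisors. Then the preimage under ψ of a section of R is a section of Q (it contains exactly one element of each fiber of Q). -/
/-- A space of quantities over a field `F` with group of dimensions `D`
(a finitely generated free abelian group): a set `Q` with a surjective
projection `dim : Q → D`, an abelian monoid product for which `dim` is a
monoid homomorphism, and on each fiber a one-dimensional `F`-vector space
structure (addition `add` and scalar multiplication `smul`, with `zero A`
the zero of the fiber over `A`), with the product distributing over
fiberwise addition and associating with scalar multiplication. -/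
structure QuantitySpace (F : Type*) [Field F] (D : Type*) [CommGroup D]
    [Module.Free ℤ (Additive D)] [Module.Finite ℤ (Additive D)]
    (Q : Type*) where
  dim : Q → D
  dim_surj : Function.Surjective dim
  mul : Q → Q → Q
  one : Q
  mul_comm : ∀ q r, mul q r = mul r q
  mul_assoc : ∀ q r s, mul (mul q r) s = mul q (mul r s)
  one_mul : ∀ q, mul one q = q
  dim_mul : ∀ q r, dim (mul q r) = dim q * dim r
  dim_one : dim one = 1
  add : Q → Q → Q
  smul : F → Q → Q
  zero : D → Q
  dim_zero : ∀ A, dim (zero A) = A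
  dim_add : ∀ q r, dim q = dim r → dim (add q r) = dim q
  dim_smul : ∀ (α : F) q, dim (smul α q) = dim q
  add_comm : ∀ q r, dim q = dim r → add q r = add r q
  add_assoc : ∀ q r s, dim q = dim r → dim r = dim s →
    add (add q r) s = add q (add r s)
  zero_add : ∀ q, add (zero (dim q)) q = q
  add_neg : ∀ q, add q (smul (-1) q) = zero (dim q)
  one_smul : ∀ q, smul 1 q = q
  mul_smul : ∀ (α β : F) q, smul (α * β) q = smul α (smul β q)
  smul_add : ∀ (α : F) q r, dim q = dim r →
    smul α (add q r) = add (smul α q) (smul α r)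
  add_smul : ∀ (α β : F) q, smul (α + β) q = add (smul α q) (smul β q)
  /-- each fiber contains a nonzero vector -/
  exists_nonzero : ∀ A : D, ∃ q, dim q = A ∧ q ≠ zero A
  /-- each fiber is one-dimensional: a nonzero vector spans it -/
  fiber_gen : ∀ q r, dim q = dim r → q ≠ zero (dim q) → ∃ α : F, r = smul α q
  /-- and a nonzero vector is free -/
  smul_injective : ∀ (α β : F) q, q ≠ zero (dim q) → smul α q = smul β q → α = β
  mul_add : ∀ q r s, dim r = dim s → mul q (add r s) = add (mul q r) (mul q s)
  smul_mul : ∀ (α : F) q r, mul (smul α q) r = smul α (mul q r)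

namespace QuantitySpace

variable {F : Type*} [Field F] {D D' : Type*} [CommGroup D] [CommGroup D']
  [Module.Free ℤ (Additive D)] [Module.Finite ℤ (Additive D)]
  [Module.Free ℤ (Additive D')] [Module.Finite ℤ (Additive D')]
  {Q R : Type*}

/-- `q` is a zero element, i.e. the zero of its fiber. -/
def IsZero (S : QuantitySpace F D Q) (q : Q) : Prop := q = S.zero (S.dim q)

/-- The space has no zero divisors: a product of nonzero quantities is nonzero. -/
def NoZeroDiv (S : QuantitySpace F D Q) : Prop :=
  ∀ q r, ¬ S.IsZero q → ¬ S.IsZero r → ¬ S.IsZero (S.mul q r)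

/-- A section of the space: `dim ∘ σ = id`. -/
def IsSection (S : QuantitySpace F D Q) (σ : D → Q) : Prop :=
  ∀ A, S.dim (σ A) = A

/-- A system of units: a nonzero section. -/
def IsNonzeroSection (S : QuantitySpace F D Q) (σ : D → Q) : Prop :=
  S.IsSection σ ∧ ∀ A, ¬ S.IsZero (σ A)

/-- A coherent section: a group homomorphism. -/
def IsCoherent (S : QuantitySpace F D Q) (σ : D → Q) : Prop :=
  σ 1 = S.one ∧ ∀ A B, σ (A * B) = S.mul (σ A) (σ B)

/-- `T` is a subspace: with the operations of `Q` restricted to `T` and the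
restricted projection, `T` is itself a space of quantities (closed under the
operations, contains the identity, the zeros and a nonzero element of each of
its fibers, and its set of dimensions is closed under inverses, so that it is
a subgroup). -/
def IsSubspace (S : QuantitySpace F D Q) (T : Set Q) : Prop :=
  S.one ∈ T ∧
  (∀ q ∈ T, ∀ r ∈ T, S.mul q r ∈ T) ∧
  (∀ q ∈ T, ∀ r ∈ T, S.dim q = S.dim r → S.add q r ∈ T) ∧
  (∀ (α : F), ∀ q ∈ T, S.smul α q ∈ T) ∧
  (∀ q ∈ T, S.zero (S.dim q) ∈ T) ∧
  (∀ q ∈ T, ∃ r ∈ T, S.dim r = S.dim q ∧ r ≠ S.zero (S.dim q)) ∧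
  (∀ q ∈ T, ∃ r ∈ T, S.dim r = (S.dim q)⁻¹)

/-- A homomorphism of spaces of quantities: multiplicative, fiber-preserving,
and `F`-linear on each fiber. -/
def IsHom (S : QuantitySpace F D Q) (T : QuantitySpace F D' R) (ψ : Q → R) : Prop :=
  (∀ q r, ψ (S.mul q r) = T.mul (ψ q) (ψ r)) ∧
  (∀ q₁ q₂, S.dim q₁ = S.dim q₂ → T.dim (ψ q₁) = T.dim (ψ q₂)) ∧
  (∀ (α β : F) (q₁ q₂ : Q), S.dim q₁ = S.dim q₂ →
    ψ (S.add (S.smul α q₁) (S.smul β q₂)) = T.add (T.smul α (ψ q₁)) (T.smul β (ψ q₂)))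

end QuantitySpace

variable {F : Type*} [Field F] {D D' : Type*} [CommGroup D] [CommGroup D']
  [Module.Free ℤ (Additive D)] [Module.Finite ℤ (Additive D)]
  [Module.Free ℤ (Additive D')] [Module.Finite ℤ (Additive D')]
  {Q R : Type*}
open QuantitySpace

lemma aux_smul_zero (S : QuantitySpace F D Q) (q : Q) :
    S.smul 0 q = S.zero (S.dim q) := by
  have h := S.add_smul 1 (-1) q
  rw [add_neg_cancel, S.one_smul, S.add_neg] at h
  exact h

lemma aux_add_zero (S : QuantitySpace F D Q) (q : Q) :
    S.add q (S.zero (S.dim q)) = q := by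
  rw [S.add_comm q _ (S.dim_zero _).symm, S.zero_add]

lemma aux_smul_zero_elem (S : QuantitySpace F D Q) (α : F) (A : D) :
    S.smul α (S.zero A) = S.zero A := by
  have h0 : S.zero A = S.smul 0 (S.zero A) := by rw [aux_smul_zero, S.dim_zero]
  conv_lhs => rw [h0, ← S.mul_smul, mul_zero]
  exact h0.symm

lemma aux_mul_zero (S : QuantitySpace F D Q) (A : D) (r : Q) :
    S.IsZero (S.mul (S.zero A) r) := by
  have h0 : S.zero A = S.smul 0 (S.zero A) := by rw [aux_smul_zero, S.dim_zero]
  rw [IsZero]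
  conv_lhs => rw [h0, S.smul_mul, aux_smul_zero]

lemma aux_hom_smul {S : QuantitySpace F D Q} {T : QuantitySpace F D' R} {ψ : Q → R}
    (hψ : IsHom S T ψ) (α : F) (q : Q) : ψ (S.smul α q) = T.smul α (ψ q) := by
  have h := hψ.2.2 α 0 q q rfl
  rw [aux_smul_zero, ← S.dim_smul α q, aux_add_zero,
    aux_smul_zero, ← T.dim_smul α (ψ q), aux_add_zero] at h
  exact h

lemma aux_hom_nonzero {S : QuantitySpace F D Q} {T : QuantitySpace F D' R} {ψ : Q → R}
    (hψ : IsHom S T ψ) (hnz : ∃ q : Q, ¬ T.IsZero (ψ q)) (hS : S.NoZeroDiv)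
    (q : Q) (hq : ¬ S.IsZero q) : ¬ T.IsZero (ψ q) := by
  obtain ⟨q₀, hq₀⟩ := hnz
  intro hz
  apply hq₀
  obtain ⟨r, hr, hrne⟩ := S.exists_nonzero ((S.dim q)⁻¹ * S.dim q₀)
  have hrnz : ¬ S.IsZero r := by rw [IsZero, hr]; exact hrne
  have hqr : S.dim (S.mul q r) = S.dim q₀ := by rw [S.dim_mul, hr]; group
  have hne : ¬ S.IsZero (S.mul q r) := hS q r hq hrnz
  obtain ⟨α, hα⟩ := S.fiber_gen (S.mul q r) q₀ hqr hne
  have e : ψ q₀ = T.smul α (T.mul (ψ q) (ψ r)) := by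
    rw [hα, aux_hom_smul hψ, hψ.1]
  rw [hz] at e
  have hzmul := aux_mul_zero T (T.dim (ψ q)) (ψ r)
  rw [IsZero] at hzmul
  rw [hzmul, aux_smul_zero_elem] at e
  rw [IsZero, e, T.dim_zero]

theorem preimage_of_section (S : QuantitySpace F D Q) (T : QuantitySpace F D' R)
    (ψ : Q → R) (hψ : IsHom S T ψ) (hnz : ∃ q : Q, ¬ T.IsZero (ψ q))
    (hS : S.NoZeroDiv) (σ : D' → R) (hσ : T.IsSection σ) (A : D) :
    ∃! q : Q, S.dim q = A ∧ ψ q ∈ Set.range σ := by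
  obtain ⟨q₁, hq₁d, hq₁ne⟩ := S.exists_nonzero A
  have hq₁nz : ¬ S.IsZero q₁ := by rw [IsZero, hq₁d]; exact hq₁ne
  have hψq₁ := aux_hom_nonzero hψ hnz hS q₁ hq₁nz
  have hψq₁' : ψ q₁ ≠ T.zero (T.dim (ψ q₁)) := hψq₁
  obtain ⟨α, hα⟩ := T.fiber_gen (ψ q₁) (σ (T.dim (ψ q₁))) (hσ _).symm hψq₁'
  refine ⟨S.smul α q₁, ⟨by rw [S.dim_smul, hq₁d], ⟨T.dim (ψ q₁), ?_⟩⟩, ?_⟩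
  · rw [aux_hom_smul hψ]; exact hα
  · rintro q' ⟨hd', B', hB'⟩
    obtain ⟨β, hβ⟩ := S.fiber_gen q₁ q' (by rw [hq₁d, hd']) (by rwa [hq₁d])
    have hdd : T.dim (ψ q') = T.dim (ψ q₁) := hψ.2.1 q' q₁ (by rw [hd', hq₁d])
    have hBB : B' = T.dim (ψ q₁) := by rw [← hσ B', hB', hdd]
    have h1 : T.smul β (ψ q₁) = T.smul α (ψ q₁) := by
      rw [← aux_hom_smul hψ, ← hβ, ← hα, ← hBB]
      exact hB'.symm
    have := T.smul_injective β α (ψ q₁) hψq₁' h1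
    rw [hβ, this]
end

section
/- Two spaces of quantities over the same field, both free of zero divisors, are isomorphic if and only if their groups of dimensions have the same rank. -/
namespace QuantitySpace

variable {F : Type*} [Field F] {D D' : Type*} [CommGroup D] [CommGroup D']
  [Module.Free ℤ (Additive D)] [Module.Finite ℤ (Additive D)]
  [Module.Free ℤ (Additive D')] [Module.Finite ℤ (Additive D')]
  {Q R : Type*}

variable (S : QuantitySpace F D Q)

lemma smul_zero_eq (q : Q) : S.smul 0 q = S.zero (S.dim q) := by
  have h := S.add_smul 1 (-1) q
  rw [show (1 : F) + (-1) = 0 by ring, S.one_smul] at h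
  rw [h, S.add_neg]

lemma smul_of_zero (α : F) (A : D) : S.smul α (S.zero A) = S.zero A := by
  have h0 : S.smul 0 (S.zero A) = S.zero A := by rw [S.smul_zero_eq, S.dim_zero]
  calc S.smul α (S.zero A) = S.smul α (S.smul 0 (S.zero A)) := by rw [h0]
    _ = S.smul (α * 0) (S.zero A) := (S.mul_smul α 0 _).symm
    _ = S.zero A := by rw [mul_zero, h0]

lemma add_zero' (q : Q) : S.add q (S.zero (S.dim q)) = q := by
  rw [S.add_comm q _ (S.dim_zero _).symm, S.zero_add]

lemma smul_ne_zero' {α : F} (hα : α ≠ 0) {q : Q} (hq : ¬ S.IsZero q) :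
    ¬ S.IsZero (S.smul α q) := by
  intro h
  apply hq
  have h' : S.smul α q = S.zero (S.dim q) := by
    have := h
    unfold IsZero at this
    rwa [S.dim_smul] at this
  show q = S.zero (S.dim q)
  calc q = S.smul 1 q := (S.one_smul q).symm
    _ = S.smul (α⁻¹ * α) q := by rw [inv_mul_cancel₀ hα]
    _ = S.smul α⁻¹ (S.smul α q) := S.mul_smul _ _ _
    _ = S.smul α⁻¹ (S.zero (S.dim q)) := by rw [h']
    _ = S.zero (S.dim q) := S.smul_of_zero _ _

lemma zero_mul' (A : D) (r : Q) : S.mul (S.zero A) r = S.zero (A * S.dim r) := by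
  have h0 : S.zero A = S.smul 0 (S.zero A) := by rw [S.smul_zero_eq, S.dim_zero]
  calc S.mul (S.zero A) r = S.mul (S.smul 0 (S.zero A)) r := by rw [← h0]
    _ = S.smul 0 (S.mul (S.zero A) r) := S.smul_mul 0 _ r
    _ = S.zero (S.dim (S.mul (S.zero A) r)) := S.smul_zero_eq _
    _ = S.zero (A * S.dim r) := by rw [S.dim_mul, S.dim_zero]

lemma one_ne_zero' : ¬ S.IsZero S.one := by
  intro h
  obtain ⟨q, hq, hq0⟩ := S.exists_nonzero 1
  have h' : S.one = S.zero 1 := by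
    have := h; unfold IsZero at this; rwa [S.dim_one] at this
  apply hq0
  calc q = S.mul S.one q := (S.one_mul q).symm
    _ = S.mul (S.zero 1) q := by rw [h']
    _ = S.zero (1 * S.dim q) := S.zero_mul' 1 q
    _ = S.zero 1 := by rw [_root_.one_mul, hq]

lemma mul_smul_smul (α β : F) (q r : Q) :
    S.mul (S.smul α q) (S.smul β r) = S.smul (α * β) (S.mul q r) := by
  calc S.mul (S.smul α q) (S.smul β r) = S.smul α (S.mul q (S.smul β r)) := S.smul_mul α q _
    _ = S.smul α (S.mul (S.smul β r) q) := by rw [S.mul_comm q]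
    _ = S.smul α (S.smul β (S.mul r q)) := by rw [S.smul_mul]
    _ = S.smul (α * β) (S.mul r q) := (S.mul_smul α β _).symm
    _ = S.smul (α * β) (S.mul q r) := by rw [S.mul_comm r q]

lemma exists_inv (hS : S.NoZeroDiv) {q : Q} (hq : ¬ S.IsZero q) :
    ∃ r, ¬ S.IsZero r ∧ S.mul q r = S.one := by
  obtain ⟨s, hsd, hs0⟩ := S.exists_nonzero (S.dim q)⁻¹
  have hs : ¬ S.IsZero s := by unfold IsZero; rw [hsd]; exact hs0
  have hm : ¬ S.IsZero (S.mul q s) := hS q s hq hs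
  have hdm : S.dim S.one = S.dim (S.mul q s) := by
    rw [S.dim_one, S.dim_mul, hsd, mul_inv_cancel]
  obtain ⟨c, hc⟩ := S.fiber_gen S.one (S.mul q s) hdm (S.one_ne_zero')
  have hcne : c ≠ 0 := by
    intro h0
    apply hm
    show S.mul q s = S.zero (S.dim (S.mul q s))
    rw [← hdm, hc, h0, S.smul_zero_eq]
  refine ⟨S.smul c⁻¹ s, S.smul_ne_zero' (inv_ne_zero hcne) hs, ?_⟩
  calc S.mul q (S.smul c⁻¹ s) = S.mul (S.smul c⁻¹ s) q := S.mul_comm _ _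
    _ = S.smul c⁻¹ (S.mul s q) := S.smul_mul _ _ _
    _ = S.smul c⁻¹ (S.mul q s) := by rw [S.mul_comm s q]
    _ = S.smul c⁻¹ (S.smul c S.one) := by rw [hc]
    _ = S.smul (c⁻¹ * c) S.one := (S.mul_smul _ _ _).symm
    _ = S.one := by rw [inv_mul_cancel₀ hcne, S.one_smul]

noncomputable def unitsGroup (hS : S.NoZeroDiv) : CommGroup {q : Q // ¬ S.IsZero q} where
  mul a b := ⟨S.mul a.1 b.1, hS _ _ a.2 b.2⟩
  one := ⟨S.one, S.one_ne_zero'⟩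
  inv a := ⟨(S.exists_inv hS a.2).choose, (S.exists_inv hS a.2).choose_spec.1⟩
  mul_assoc a b c := Subtype.ext (S.mul_assoc a.1 b.1 c.1)
  one_mul a := Subtype.ext (S.one_mul a.1)
  mul_one a := Subtype.ext ((S.mul_comm a.1 S.one).trans (S.one_mul a.1))
  inv_mul_cancel a := Subtype.ext
    ((S.mul_comm _ a.1).trans (S.exists_inv hS a.2).choose_spec.2)
  mul_comm a b := Subtype.ext (S.mul_comm a.1 b.1)

lemma exists_coherent (hS : S.NoZeroDiv) :
    ∃ σ : D → Q, (∀ A, S.dim (σ A) = A) ∧ (∀ A, ¬ S.IsZero (σ A)) ∧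
      (∀ A B, σ (A * B) = S.mul (σ A) (σ B)) := by
  letI : CommGroup {q : Q // ¬ S.IsZero q} := S.unitsGroup hS
  let f : Additive {q : Q // ¬ S.IsZero q} →+ Additive D :=
    AddMonoidHom.mk' (fun a => Additive.ofMul (S.dim (Additive.toMul a).1))
      (fun a b => congrArg Additive.ofMul
        (S.dim_mul (Additive.toMul a).1 (Additive.toMul b).1))
  have fsurj : Function.Surjective f.toIntLinearMap := by
    intro A
    obtain ⟨q, hq, hq0⟩ := S.exists_nonzero (Additive.toMul A)
    refine ⟨Additive.ofMul (⟨q, ?_⟩ : {q : Q // ¬ S.IsZero q}), ?_⟩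
    · unfold IsZero; rw [hq]; exact hq0
    · show Additive.ofMul (S.dim q) = A
      rw [hq]
      exact ofMul_toMul A
  obtain ⟨h, hh⟩ := Module.projective_lifting_property f.toIntLinearMap LinearMap.id fsurj
  refine ⟨fun A => (Additive.toMul (h (Additive.ofMul A))).1, ?_, ?_, ?_⟩
  · intro A
    have h2 := LinearMap.congr_fun hh (Additive.ofMul A)
    exact congrArg Additive.toMul h2
  · intro A
    exact (Additive.toMul (h (Additive.ofMul A))).2
  · intro A B
    have h3 : h (Additive.ofMul (A * B)) = h (Additive.ofMul A) + h (Additive.ofMul B) := by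
      rw [show Additive.ofMul (A * B) = Additive.ofMul A + Additive.ofMul B from rfl, map_add]
    show (Additive.toMul (h (Additive.ofMul (A * B)))).1 =
      S.mul (Additive.toMul (h (Additive.ofMul A))).1 (Additive.toMul (h (Additive.ofMul B))).1
    rw [h3]
    rfl

end QuantitySpace

variable {F : Type*} [Field F] {D D' : Type*} [CommGroup D] [CommGroup D']
  [Module.Free ℤ (Additive D)] [Module.Finite ℤ (Additive D)]
  [Module.Free ℤ (Additive D')] [Module.Finite ℤ (Additive D')]
  {Q R : Type*}
open QuantitySpace

theorem classification (S : QuantitySpace F D Q) (T : QuantitySpace F D' R)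
    (hS : S.NoZeroDiv) (hT : T.NoZeroDiv) :
    (∃ ψ : Q → R, IsHom S T ψ ∧ Function.Bijective ψ) ↔
      Module.finrank ℤ (Additive D) = Module.finrank ℤ (Additive D') := by
  constructor
  · rintro ⟨ψ, ⟨hmul, hdim, hlin⟩, hinj, hsurj⟩
    -- ψ commutes with smul
    have psmul : ∀ (α : F) (q : Q), ψ (S.smul α q) = T.smul α (ψ q) := by
      intro α q
      have e1 : S.add (S.smul α q) (S.smul 0 q) = S.smul α q := by
        rw [S.smul_zero_eq, ← S.dim_smul α q]
        exact S.add_zero' _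
      have e2 := hlin α 0 q q rfl
      rw [e1, T.smul_zero_eq, ← T.dim_smul α (ψ q), T.add_zero'] at e2
      exact e2
    have pzero : ∀ A : D, ψ (S.zero A) = T.zero (T.dim (ψ (S.zero A))) := by
      intro A
      have h0 : S.zero A = S.smul 0 (S.zero A) := by rw [S.smul_zero_eq, S.dim_zero]
      calc ψ (S.zero A) = ψ (S.smul 0 (S.zero A)) := by rw [← h0]
        _ = T.smul 0 (ψ (S.zero A)) := psmul 0 _
        _ = T.zero (T.dim (ψ (S.zero A))) := T.smul_zero_eq _
    have pnonzero : ∀ {q : Q}, ¬ S.IsZero q → ¬ T.IsZero (ψ q) := by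
      intro q hq h
      apply hq
      have h' : ψ q = T.zero (T.dim (ψ q)) := h
      have hd : T.dim (ψ (S.zero (S.dim q))) = T.dim (ψ q) := hdim _ _ (S.dim_zero _)
      have key : ψ (S.zero (S.dim q)) = ψ q := by rw [pzero, hd, ← h']
      exact (hinj key).symm
    set δ : D → D' := fun A => T.dim (ψ (S.zero A)) with hδ
    have δmul : ∀ A B, δ (A * B) = δ A * δ B := by
      intro A B
      have hz : S.zero (A * B) = S.mul (S.zero A) (S.zero B) := by
        rw [S.zero_mul', S.dim_zero]
      show T.dim (ψ (S.zero (A * B))) = _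
      rw [hz, hmul, T.dim_mul]
    have δsurj : Function.Surjective δ := by
      intro B
      obtain ⟨r, hr⟩ := T.dim_surj B
      obtain ⟨q, hq⟩ := hsurj r
      refine ⟨S.dim q, ?_⟩
      show T.dim (ψ (S.zero (S.dim q))) = B
      rw [hdim _ _ (S.dim_zero _), hq, hr]
    have δinj : Function.Injective δ := by
      intro A B hAB
      obtain ⟨q₁, h1d, h10⟩ := S.exists_nonzero A
      have hq1 : ¬ S.IsZero q₁ := by unfold QuantitySpace.IsZero; rw [h1d]; exact h10
      have hψ1 : ¬ T.IsZero (ψ q₁) := pnonzero hq1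
      have hd1 : T.dim (ψ q₁) = T.dim (ψ (S.zero B)) := by
        calc T.dim (ψ q₁) = T.dim (ψ (S.zero A)) := hdim _ _ (by rw [h1d, S.dim_zero])
          _ = T.dim (ψ (S.zero B)) := hAB
      obtain ⟨α, hα⟩ := T.fiber_gen (ψ q₁) (ψ (S.zero B)) hd1 hψ1
      have hz : S.zero B = S.smul α q₁ := hinj (hα.trans (psmul α q₁).symm)
      calc A = S.dim q₁ := h1d.symm
        _ = S.dim (S.smul α q₁) := (S.dim_smul α q₁).symm
        _ = S.dim (S.zero B) := by rw [← hz]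
        _ = B := S.dim_zero B
    let e : Additive D ≃+ Additive D' :=
      AddEquiv.mk' (Equiv.ofBijective (fun a => Additive.ofMul (δ (Additive.toMul a)))
        ⟨fun a b hab => congrArg Additive.ofMul (δinj (congrArg Additive.toMul hab)),
         fun b => ⟨Additive.ofMul (δsurj (Additive.toMul b)).choose,
           congrArg Additive.ofMul (δsurj (Additive.toMul b)).choose_spec⟩⟩)
        (fun a b => congrArg Additive.ofMul (δmul (Additive.toMul a) (Additive.toMul b)))
    exact e.toIntLinearEquiv.finrank_eq
  · intro hrank
    -- group isomorphism from equal rank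
    have hcard : Fintype.card (Module.Free.ChooseBasisIndex ℤ (Additive D)) =
        Fintype.card (Module.Free.ChooseBasisIndex ℤ (Additive D')) := by
      rw [← Module.finrank_eq_card_chooseBasisIndex, ← Module.finrank_eq_card_chooseBasisIndex,
        hrank]
    let e : Additive D ≃ₗ[ℤ] Additive D' :=
      (Module.Free.chooseBasis ℤ (Additive D)).equiv
        (Module.Free.chooseBasis ℤ (Additive D')) (Fintype.equivOfCardEq hcard)
    let φ : D → D' := fun A => Additive.toMul (e (Additive.ofMul A))
    have φmul : ∀ A B, φ (A * B) = φ A * φ B := fun A B =>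
      congrArg Additive.toMul (e.map_add (Additive.ofMul A) (Additive.ofMul B))
    have φinj : Function.Injective φ := fun A B h =>
      congrArg Additive.toMul (e.injective (Additive.toMul.injective h))
    have φsurj : Function.Surjective φ := by
      intro B'
      obtain ⟨x, hx⟩ := e.surjective (Additive.ofMul B')
      exact ⟨Additive.toMul x, congrArg Additive.toMul hx⟩
    obtain ⟨σ, σdim, σnz, σmul⟩ := S.exists_coherent hS
    obtain ⟨τ, τdim, τnz, τmul⟩ := T.exists_coherent hT
    have coordex : ∀ q : Q, ∃ α : F, q = S.smul α (σ (S.dim q)) := fun q =>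
      S.fiber_gen (σ (S.dim q)) q (σdim _) (σnz _)
    choose c hc using coordex
    have cuniq : ∀ (q : Q) (α : F), q = S.smul α (σ (S.dim q)) → α = c q := by
      intro q α hα
      exact S.smul_injective α (c q) (σ (S.dim q)) (σnz _) (by rw [← hα, ← hc])
    set ψ : Q → R := fun q => T.smul (c q) (τ (φ (S.dim q))) with hψdef
    have ψdim : ∀ q, T.dim (ψ q) = φ (S.dim q) := by
      intro q
      show T.dim (T.smul (c q) (τ (φ (S.dim q)))) = φ (S.dim q)
      rw [T.dim_smul, τdim]
    have csmulσ : ∀ (β : F) (A : D), c (S.smul β (σ A)) = β := by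
      intro β A
      have hd : S.dim (S.smul β (σ A)) = A := by rw [S.dim_smul, σdim]
      exact (cuniq _ β (by rw [hd])).symm
    refine ⟨ψ, ⟨?_, ?_, ?_⟩, ?_, ?_⟩
    · -- multiplicative
      intro q r
      have key : S.mul q r = S.smul (c q * c r) (σ (S.dim (S.mul q r))) := by
        calc S.mul q r
            = S.mul (S.smul (c q) (σ (S.dim q))) (S.smul (c r) (σ (S.dim r))) := by
              rw [← hc, ← hc]
          _ = S.smul (c q * c r) (S.mul (σ (S.dim q)) (σ (S.dim r))) := S.mul_smul_smul _ _ _ _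
          _ = S.smul (c q * c r) (σ (S.dim q * S.dim r)) := by rw [σmul]
          _ = S.smul (c q * c r) (σ (S.dim (S.mul q r))) := by rw [S.dim_mul]
      have cmul : c (S.mul q r) = c q * c r := (cuniq _ _ key).symm
      show T.smul (c (S.mul q r)) (τ (φ (S.dim (S.mul q r)))) =
        T.mul (T.smul (c q) (τ (φ (S.dim q)))) (T.smul (c r) (τ (φ (S.dim r))))
      rw [cmul, S.dim_mul, φmul, τmul, T.mul_smul_smul]
    · -- fiber preserving
      intro q₁ q₂ h
      rw [ψdim, ψdim, h]
    · -- linear on fibers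
      intro α β q₁ q₂ h
      have key : S.add (S.smul α q₁) (S.smul β q₂) =
          S.smul (α * c q₁ + β * c q₂) (σ (S.dim q₁)) := by
        calc S.add (S.smul α q₁) (S.smul β q₂)
            = S.add (S.smul α (S.smul (c q₁) (σ (S.dim q₁))))
                (S.smul β (S.smul (c q₂) (σ (S.dim q₂)))) := by rw [← hc, ← hc]
          _ = S.add (S.smul (α * c q₁) (σ (S.dim q₁)))
                (S.smul (β * c q₂) (σ (S.dim q₁))) := by rw [← S.mul_smul, ← S.mul_smul, ← h]
          _ = S.smul (α * c q₁ + β * c q₂) (σ (S.dim q₁)) := (S.add_smul _ _ _).symm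
      have hdadd : S.dim (S.add (S.smul α q₁) (S.smul β q₂)) = S.dim q₁ := by
        rw [key, S.dim_smul, σdim]
      have cadd : c (S.add (S.smul α q₁) (S.smul β q₂)) = α * c q₁ + β * c q₂ :=
        (cuniq _ _ (by rw [hdadd]; exact key)).symm
      show T.smul (c (S.add (S.smul α q₁) (S.smul β q₂)))
          (τ (φ (S.dim (S.add (S.smul α q₁) (S.smul β q₂))))) =
        T.add (T.smul α (T.smul (c q₁) (τ (φ (S.dim q₁)))))
          (T.smul β (T.smul (c q₂) (τ (φ (S.dim q₂)))))
      rw [cadd, hdadd, ← h, ← T.mul_smul, ← T.mul_smul, ← T.add_smul]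
    · -- injective
      intro q r h
      have hd : S.dim q = S.dim r := by
        have := congrArg T.dim h
        rw [ψdim, ψdim] at this
        exact φinj this
      have hcc : c q = c r := by
        have h' : T.smul (c q) (τ (φ (S.dim q))) = T.smul (c r) (τ (φ (S.dim q))) := by
          have := h
          rw [hψdef] at this
          simpa [← hd] using this
        exact T.smul_injective _ _ _ (τnz _) h'
      calc q = S.smul (c q) (σ (S.dim q)) := hc q
        _ = S.smul (c r) (σ (S.dim r)) := by rw [hcc, hd]
        _ = r := (hc r).symm
    · -- surjective
      intro r
      obtain ⟨A, hA⟩ := φsurj (T.dim r)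
      obtain ⟨β, hβ⟩ := T.fiber_gen (τ (T.dim r)) r (τdim _) (τnz _)
      refine ⟨S.smul β (σ A), ?_⟩
      have hdq : S.dim (S.smul β (σ A)) = A := by rw [S.dim_smul, σdim]
      show T.smul (c (S.smul β (σ A))) (τ (φ (S.dim (S.smul β (σ A))))) = r
      rw [csmulσ, hdq, hA, ← hβ]
end
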